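/- arXiv:2601.22100 — 2 statements merged into one kernel-verified Lean document; each statement's English description precedes it below -/
import Mathlib

section
/- Contraction of the soft VaR Bellman optimality operator: for a finite MDP with discount γ ∈ (0,1), clipping parameter ε ∈ (0, 1/2), smoothing parameter κ ∈ (0,1], and step size η ∈ (0, κ], the operator (T*_{ε,κ} v)(s,α) := v(s,α) + η·max_a E[ ∂l^κ_{clip(α)}( r(s,a) + γ v(s', U) − v(s,α) ) ], where clip(α) := max(ε, min(1−ε, α)) and U ~ Uniform[0,1] is independent, satisfies ‖T*_{ε,κ} v₁ − T*_{ε,κ} v₂‖_∞ ≤ (1 − η ε κ (1−γ)) ‖v₁ − v₂‖_∞; i.e., it is a contraction with modulus 1 − ηεκ(1−γ) < 1. -/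
open MeasureTheory Set

/-- The soft pinball loss derivative `∂l_β^κ`. -/
noncomputable def softPinballDeriv (β κ δ : ℝ) : ℝ :=
  if δ < -κ then (1 - β) * (κ * δ + κ ^ 2 - 1)
  else if δ < 0 then (1 - β) / κ * δ
  else if δ < κ then β / κ * δ
  else β * (κ * δ - κ ^ 2 + 1)

/-- The soft VaR Bellman optimality operator
`(T*_{ε,κ} v)(s,α) = v(s,α) + η·max_a E[∂l^κ_{clip(α)}(r + γ v(s',U) − v(s,α))]`,
with `clip(α) = max(ε, min(1−ε, α))` and `U ~ Uniform[0,1]` independent of `(r,s')`. -/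
noncomputable def softVaRBellman {S A : Type*} [MeasurableSpace S] [Fintype A] [Nonempty A]
    (P : S → A → Measure (ℝ × S)) (γ ε κ η : ℝ)
    (v : S → ℝ → ℝ) (s : S) (α : ℝ) : ℝ :=
  v s α + η * ⨆ a : A,
    ∫ p : (ℝ × S) × ℝ,
      softPinballDeriv (max ε (min (1 - ε) α)) κ (p.1.1 + γ * v p.1.2 p.2 - v s α)
      ∂((P s a).prod (volume.restrict (Set.Icc (0:ℝ) 1)))

/-- `κ` times the soft pinball derivative, divided form removed. -/
noncomputable def pinAux (β κ δ : ℝ) : ℝ :=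
  if δ < -κ then κ * (1 - β) * (κ * δ + κ ^ 2 - 1)
  else if δ < 0 then (1 - β) * δ
  else if δ < κ then β * δ
  else κ * β * (κ * δ - κ ^ 2 + 1)

lemma mul_softPinballDeriv {κ : ℝ} (hκ : κ ≠ 0) (β δ : ℝ) :
    κ * softPinballDeriv β κ δ = pinAux β κ δ := by
  unfold softPinballDeriv pinAux
  split_ifs <;> first
  | (rw [div_mul_eq_mul_div, ← mul_div_assoc, mul_div_cancel_left₀ _ hκ])
  | ring

lemma seg_bound {ε κ s L : ℝ} (h1 : ε*κ^2 ≤ s) (h2 : s ≤ 1-ε) (hL : 0 ≤ L) :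
    ε*κ^2*L ≤ s*L ∧ s*L ≤ (1-ε)*L :=
  ⟨mul_le_mul_of_nonneg_right h1 hL, mul_le_mul_of_nonneg_right h2 hL⟩

lemma pinAux_slope {β κ ε : ℝ} (hε0 : 0 < ε) (hε2 : ε < 1/2) (hκ0 : 0 < κ) (hκ1 : κ ≤ 1)
    (hβ1 : ε ≤ β) (hβ2 : β ≤ 1 - ε) {x y : ℝ} (hxy : x ≤ y) :
    ε * κ^2 * (y - x) ≤ pinAux β κ y - pinAux β κ x ∧
    pinAux β κ y - pinAux β κ x ≤ (1 - ε) * (y - x) := by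
  have hκ2 : κ^2 ≤ 1 := by nlinarith
  have lo1 : ε*κ^2 ≤ (1-β)*κ^2 := by nlinarith
  have hi1 : (1-β)*κ^2 ≤ 1-ε := by nlinarith
  have lo2 : ε*κ^2 ≤ 1-β := by nlinarith
  have hi2 : (1-β) ≤ 1-ε := by linarith
  have lo3 : ε*κ^2 ≤ β := by nlinarith
  have hi3 : β ≤ 1-ε := hβ2
  have lo4 : ε*κ^2 ≤ β*κ^2 := by nlinarith
  have hi4 : β*κ^2 ≤ 1-ε := by nlinarith
  rcases lt_or_ge x (-κ) with hx1 | hx1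
  · rcases lt_or_ge y (-κ) with hy1 | hy1
    · have e : pinAux β κ y - pinAux β κ x = (1-β)*κ^2 * (y-x) := by
        unfold pinAux; split_ifs <;> first | (exfalso; linarith) | ring
      obtain ⟨b1, b2⟩ := seg_bound lo1 hi1 (by linarith : (0:ℝ) ≤ y - x)
      constructor <;> linarith
    · rcases lt_or_ge y 0 with hy2 | hy2
      · have e : pinAux β κ y - pinAux β κ x = (1-β)*(y+κ) + (1-β)*κ^2*(-κ-x) := by
          unfold pinAux; split_ifs <;> first | (exfalso; linarith) | ring
        obtain ⟨b1, b2⟩ := seg_bound lo2 hi2 (by linarith : (0:ℝ) ≤ y + κ)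
        obtain ⟨c1, c2⟩ := seg_bound lo1 hi1 (by linarith : (0:ℝ) ≤ -κ - x)
        constructor <;> linarith
      · rcases lt_or_ge y κ with hy3 | hy3
        · have e : pinAux β κ y - pinAux β κ x =
              β*y + (1-β)*κ + (1-β)*κ^2*(-κ-x) := by
            unfold pinAux; split_ifs <;> first | (exfalso; linarith) | ring
          obtain ⟨b1, b2⟩ := seg_bound lo3 hi3 hy2
          obtain ⟨c1, c2⟩ := seg_bound lo2 hi2 hκ0.le
          obtain ⟨d1, d2⟩ := seg_bound lo1 hi1 (by linarith : (0:ℝ) ≤ -κ - x)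
          constructor <;> linarith
        · have e : pinAux β κ y - pinAux β κ x =
              β*κ^2*(y-κ) + β*κ + (1-β)*κ + (1-β)*κ^2*(-κ-x) := by
            unfold pinAux; split_ifs <;> first | (exfalso; linarith) | ring
          obtain ⟨b1, b2⟩ := seg_bound lo4 hi4 (by linarith : (0:ℝ) ≤ y - κ)
          obtain ⟨c1, c2⟩ := seg_bound lo3 hi3 hκ0.le
          obtain ⟨c1', c2'⟩ := seg_bound lo2 hi2 hκ0.le
          obtain ⟨d1, d2⟩ := seg_bound lo1 hi1 (by linarith : (0:ℝ) ≤ -κ - x)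
          constructor <;> linarith
  · rcases lt_or_ge x 0 with hx2 | hx2
    · rcases lt_or_ge y 0 with hy2 | hy2
      · have e : pinAux β κ y - pinAux β κ x = (1-β)*(y-x) := by
          unfold pinAux; split_ifs <;> first | (exfalso; linarith) | ring
        obtain ⟨b1, b2⟩ := seg_bound lo2 hi2 (by linarith : (0:ℝ) ≤ y - x)
        constructor <;> linarith
      · rcases lt_or_ge y κ with hy3 | hy3
        · have e : pinAux β κ y - pinAux β κ x = β*y + (1-β)*(-x) := by
            unfold pinAux; split_ifs <;> first | (exfalso; linarith) | ring
          obtain ⟨b1, b2⟩ := seg_bound lo3 hi3 hy2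
          obtain ⟨c1, c2⟩ := seg_bound lo2 hi2 (by linarith : (0:ℝ) ≤ -x)
          constructor <;> linarith
        · have e : pinAux β κ y - pinAux β κ x =
              β*κ^2*(y-κ) + β*κ + (1-β)*(-x) := by
            unfold pinAux; split_ifs <;> first | (exfalso; linarith) | ring
          obtain ⟨b1, b2⟩ := seg_bound lo4 hi4 (by linarith : (0:ℝ) ≤ y - κ)
          obtain ⟨c1, c2⟩ := seg_bound lo3 hi3 hκ0.le
          obtain ⟨d1, d2⟩ := seg_bound lo2 hi2 (by linarith : (0:ℝ) ≤ -x)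
          constructor <;> linarith
    · rcases lt_or_ge x κ with hx3 | hx3
      · rcases lt_or_ge y κ with hy3 | hy3
        · have e : pinAux β κ y - pinAux β κ x = β*(y-x) := by
            unfold pinAux; split_ifs <;> first | (exfalso; linarith) | ring
          obtain ⟨b1, b2⟩ := seg_bound lo3 hi3 (by linarith : (0:ℝ) ≤ y - x)
          constructor <;> linarith
        · have e : pinAux β κ y - pinAux β κ x = β*κ^2*(y-κ) + β*(κ-x) := by
            unfold pinAux; split_ifs <;> first | (exfalso; linarith) | ring
          obtain ⟨b1, b2⟩ := seg_bound lo4 hi4 (by linarith : (0:ℝ) ≤ y - κ)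
          obtain ⟨c1, c2⟩ := seg_bound lo3 hi3 (by linarith : (0:ℝ) ≤ κ - x)
          constructor <;> linarith
      · have e : pinAux β κ y - pinAux β κ x = β*κ^2*(y-x) := by
          unfold pinAux; split_ifs <;> first | (exfalso; linarith) | ring
        obtain ⟨b1, b2⟩ := seg_bound lo4 hi4 (by linarith : (0:ℝ) ≤ y - x)
        constructor <;> linarith

lemma pinAux_zero {β κ : ℝ} (hκ0 : 0 < κ) : pinAux β κ 0 = 0 := by
  unfold pinAux; split_ifs <;> first | (exfalso; linarith) | ring

/-- Linear growth: `κ·|∂l(δ)| ≤ |δ|`. -/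
lemma mul_abs_softPinballDeriv_le {β κ ε : ℝ} (hε0 : 0 < ε) (hε2 : ε < 1/2)
    (hκ0 : 0 < κ) (hκ1 : κ ≤ 1) (hβ1 : ε ≤ β) (hβ2 : β ≤ 1 - ε) (δ : ℝ) :
    κ * |softPinballDeriv β κ δ| ≤ |δ| := by
  have habs : κ * |softPinballDeriv β κ δ| = |pinAux β κ δ| := by
    rw [← abs_of_pos hκ0, ← abs_mul, abs_of_pos hκ0, mul_softPinballDeriv hκ0.ne' β δ]
  rw [habs]
  rcases le_total 0 δ with hδ | hδ
  · obtain ⟨h1, h2⟩ := pinAux_slope hε0 hε2 hκ0 hκ1 hβ1 hβ2 hδ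
    rw [pinAux_zero hκ0] at h1 h2
    rw [abs_of_nonneg hδ, abs_le]
    constructor <;> nlinarith [mul_nonneg (mul_nonneg hε0.le (sq_nonneg κ)) hδ]
  · obtain ⟨h1, h2⟩ := pinAux_slope hε0 hε2 hκ0 hκ1 hβ1 hβ2 hδ
    rw [pinAux_zero hκ0] at h1 h2
    rw [abs_of_nonpos hδ, abs_le]
    constructor <;> nlinarith [mul_nonneg (mul_nonneg hε0.le (sq_nonneg κ)) (by linarith : (0:ℝ) ≤ -δ)]

lemma measurable_softPinballDeriv (β κ : ℝ) : Measurable (softPinballDeriv β κ) := by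
  unfold softPinballDeriv
  refine Measurable.ite (measurableSet_lt measurable_id measurable_const) (by fun_prop) ?_
  refine Measurable.ite (measurableSet_lt measurable_id measurable_const) (by fun_prop) ?_
  exact Measurable.ite (measurableSet_lt measurable_id measurable_const) (by fun_prop) (by fun_prop)

/-- The pointwise contraction estimate. -/
lemma key_pointwise {γ ε κ η β : ℝ} (hγ0 : 0 < γ) (hγ1 : γ < 1) (hε0 : 0 < ε) (hε2 : ε < 1/2)
    (hκ0 : 0 < κ) (hκ1 : κ ≤ 1) (hη0 : 0 < η) (hηκ : η ≤ κ) (hβ1 : ε ≤ β) (hβ2 : β ≤ 1-ε)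
    {C d w x y : ℝ} (hd : |d| ≤ C) (hw : |w| ≤ C) (hxy : x - y = γ * w - d) :
    |d + η * (softPinballDeriv β κ x - softPinballDeriv β κ y)| ≤
      (1 - η * ε * κ * (1 - γ)) * C := by
  have hC : 0 ≤ C := (abs_nonneg d).trans hd
  obtain ⟨hd1, hd2⟩ := abs_le.1 hd
  obtain ⟨hw1, hw2⟩ := abs_le.1 hw
  set D := softPinballDeriv β κ x - softPinballDeriv β κ y with hDdef
  have hκD : κ * D = pinAux β κ x - pinAux β κ y := by
    rw [hDdef, mul_sub, mul_softPinballDeriv hκ0.ne', mul_softPinballDeriv hκ0.ne']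
  have hκsq : κ^2 ≤ 1 := by nlinarith
  have hεκ2 : ε*κ^2 ≤ 1 := by nlinarith [sq_nonneg κ]
  have c1 : 0 ≤ κ - η*ε*κ^2 := by
    nlinarith [mul_nonneg (sub_nonneg.2 hηκ) (mul_nonneg hε0.le (sq_nonneg κ)),
      mul_nonneg hκ0.le (sub_nonneg.2 hεκ2)]
  have c2 : 0 ≤ κ - η*(1-ε) := by nlinarith [mul_nonneg hη0.le hε0.le]
  have c3 : 0 ≤ (1-ε) - ε*κ^2 := by
    nlinarith [mul_nonneg hε0.le (sub_nonneg.2 hκsq)]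
  have p3 : 0 ≤ η*(1-γ)*C*((1-ε) - ε*κ^2) :=
    mul_nonneg (mul_nonneg (mul_nonneg hη0.le (by linarith)) hC) c3
  rw [abs_le]
  rcases le_total y x with hyx | hyx
  · obtain ⟨s1, s2⟩ := pinAux_slope hε0 hε2 hκ0 hκ1 hβ1 hβ2 hyx
    have s1' : ε*κ^2*(γ*w - d) ≤ κ*D := by rw [hκD, ← hxy]; exact s1
    have s2' : κ*D ≤ (1-ε)*(γ*w - d) := by rw [hκD, ← hxy]; exact s2
    have h5 : η*(ε*κ^2*(γ*w - d)) ≤ η*(κ*D) := mul_le_mul_of_nonneg_left s1' hη0.le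
    have h6 : η*(κ*D) ≤ η*((1-ε)*(γ*w - d)) := mul_le_mul_of_nonneg_left s2' hη0.le
    constructor
    · have q1 : 0 ≤ (κ - η*ε*κ^2) * (C + d) := mul_nonneg c1 (by linarith)
      have q2 : 0 ≤ η*ε*κ^2*γ*(C + w) :=
        mul_nonneg (mul_nonneg (by positivity) hγ0.le) (by linarith)
      have G : κ * (-((1 - η * ε * κ * (1 - γ)) * C)) ≤ κ * (d + η * D) := by linarith [h5]
      exact le_of_mul_le_mul_left G hκ0
    · have p1 : 0 ≤ (κ - η*(1-ε)) * (C - d) := mul_nonneg c2 (by linarith)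
      have p2 : 0 ≤ η*(1-ε)*γ*(C - w) :=
        mul_nonneg (mul_nonneg (mul_nonneg hη0.le (by linarith)) hγ0.le) (by linarith)
      have G : κ * (d + η * D) ≤ κ * ((1 - η * ε * κ * (1 - γ)) * C) := by linarith [h6]
      exact le_of_mul_le_mul_left G hκ0
  · obtain ⟨s1, s2⟩ := pinAux_slope hε0 hε2 hκ0 hκ1 hβ1 hβ2 hyx
    have hyx' : y - x = d - γ * w := by linarith
    have s1' : ε*κ^2*(d - γ*w) ≤ -(κ*D) := by
      rw [hκD, ← hyx']; have := s1; linarith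
    have s2' : -(κ*D) ≤ (1-ε)*(d - γ*w) := by
      rw [hκD, ← hyx']; have := s2; linarith
    have h5 : η*(ε*κ^2*(d - γ*w)) ≤ η*(-(κ*D)) := mul_le_mul_of_nonneg_left s1' hη0.le
    have h6 : η*(-(κ*D)) ≤ η*((1-ε)*(d - γ*w)) := mul_le_mul_of_nonneg_left s2' hη0.le
    constructor
    · have p1 : 0 ≤ (κ - η*(1-ε)) * (C + d) := mul_nonneg c2 (by linarith)
      have p2 : 0 ≤ η*(1-ε)*γ*(C + w) :=
        mul_nonneg (mul_nonneg (mul_nonneg hη0.le (by linarith)) hγ0.le) (by linarith)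
      have G : κ * (-((1 - η * ε * κ * (1 - γ)) * C)) ≤ κ * (d + η * D) := by linarith [h6]
      exact le_of_mul_le_mul_left G hκ0
    · have q1 : 0 ≤ (κ - η*ε*κ^2) * (C - d) := mul_nonneg c1 (by linarith)
      have q2 : 0 ≤ η*ε*κ^2*γ*(C - w) :=
        mul_nonneg (mul_nonneg (by positivity) hγ0.le) (by linarith)
      have G : κ * (d + η * D) ≤ κ * ((1 - η * ε * κ * (1 - γ)) * C) := by linarith [h5]
      exact le_of_mul_le_mul_left G hκ0

/-- contraction of the soft VaR Bellman optimality operator.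
For a finite MDP with `γ ∈ (0,1)`, `ε ∈ (0,1/2)`, `κ ∈ (0,1]` and step size
`η ∈ (0,κ]`, the operator `T*_{ε,κ}` satisfies
`‖T*_{ε,κ} v₁ − T*_{ε,κ} v₂‖_∞ ≤ (1 − ηεκ(1−γ))·‖v₁ − v₂‖_∞`. -/
theorem softVaRBellman_contraction
    {S A : Type*} [Fintype S] [Nonempty S] [MeasurableSpace S] [MeasurableSingletonClass S]
    [Fintype A] [Nonempty A]
    (P : S → A → Measure (ℝ × S)) (hP : ∀ s a, IsProbabilityMeasure (P s a))
    (hr : ∃ M : ℝ, ∀ s a, ∀ᵐ p ∂(P s a), |p.1| ≤ M)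
    (γ ε κ η : ℝ) (hγ : γ ∈ Set.Ioo (0:ℝ) 1) (hε : ε ∈ Set.Ioo (0:ℝ) (1/2))
    (hκ : κ ∈ Set.Ioc (0:ℝ) 1) (hη : η ∈ Set.Ioc (0:ℝ) κ)
    (v₁ v₂ : S → ℝ → ℝ)
    (hm₁ : ∀ s, Measurable (v₁ s)) (hm₂ : ∀ s, Measurable (v₂ s))
    (hb₁ : ∃ M : ℝ, ∀ s, ∀ α ∈ Set.Icc (0:ℝ) 1, |v₁ s α| ≤ M)
    (hb₂ : ∃ M : ℝ, ∀ s, ∀ α ∈ Set.Icc (0:ℝ) 1, |v₂ s α| ≤ M) :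
    ∀ C : ℝ, 0 ≤ C →
      (∀ s, ∀ α ∈ Set.Icc (0:ℝ) 1, |v₁ s α - v₂ s α| ≤ C) →
      ∀ s, ∀ α ∈ Set.Icc (0:ℝ) 1,
        |softVaRBellman P γ ε κ η v₁ s α - softVaRBellman P γ ε κ η v₂ s α| ≤
          (1 - η * ε * κ * (1 - γ)) * C := by
  obtain ⟨hγ0, hγ1⟩ := hγ
  obtain ⟨hε0, hε2⟩ := hε
  obtain ⟨hκ0, hκ1⟩ := hκ
  obtain ⟨hη0, hηκ⟩ := hη
  obtain ⟨M, hM⟩ := hr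
  obtain ⟨M₁, hM₁⟩ := hb₁
  obtain ⟨M₂, hM₂⟩ := hb₂
  intro C hC hdiff s α hα
  set B := (1 - η * ε * κ * (1 - γ)) * C with hBdef
  set β := max ε (min (1 - ε) α) with hβdef
  have hβ1 : ε ≤ β := le_max_left _ _
  have hβ2 : β ≤ 1 - ε := max_le (by linarith) (min_le_left _ _)
  haveI : IsProbabilityMeasure (volume.restrict (Set.Icc (0:ℝ) 1)) := by
    constructor
    rw [Measure.restrict_apply_univ, Real.volume_Icc]
    norm_num
  have hdC : |v₁ s α - v₂ s α| ≤ C := hdiff s α hα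
  -- measurability of the integrands
  have hvm : ∀ (v : S → ℝ → ℝ), (∀ t, Measurable (v t)) →
      Measurable (fun p : (ℝ × S) × ℝ =>
        softPinballDeriv β κ (p.1.1 + γ * v p.1.2 p.2 - v s α)) := by
    intro v hv
    apply (measurable_softPinballDeriv β κ).comp
    have h1 : Measurable (fun q : ℝ × S => v q.2 q.1) :=
      measurable_from_prod_countable_left (fun t => hv t)
    have h2 : Measurable (fun p : (ℝ × S) × ℝ => v p.1.2 p.2) :=
      h1.comp (measurable_snd.prodMk measurable_fst.snd)
    exact ((measurable_fst.fst).add (measurable_const.mul h2)).sub measurable_const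
  -- per-action contraction bound
  have key : ∀ a : A,
      |(v₁ s α - v₂ s α) + η *
        ((∫ p : (ℝ × S) × ℝ,
            softPinballDeriv β κ (p.1.1 + γ * v₁ p.1.2 p.2 - v₁ s α)
            ∂((P s a).prod (volume.restrict (Set.Icc (0:ℝ) 1)))) -
         (∫ p : (ℝ × S) × ℝ,
            softPinballDeriv β κ (p.1.1 + γ * v₂ p.1.2 p.2 - v₂ s α)
            ∂((P s a).prod (volume.restrict (Set.Icc (0:ℝ) 1)))))| ≤ B := by
    intro a
    haveI := hP s a
    set μ := (P s a).prod (volume.restrict (Set.Icc (0:ℝ) 1)) with hμ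
    haveI : IsProbabilityMeasure μ := by rw [hμ]; infer_instance
    have hae1 : ∀ᵐ p ∂μ, |p.1.1| ≤ M := Measure.quasiMeasurePreserving_fst.ae (hM s a)
    have hae2 : ∀ᵐ p ∂μ, p.2 ∈ Set.Icc (0:ℝ) 1 :=
      Measure.quasiMeasurePreserving_snd.ae (ae_restrict_mem measurableSet_Icc)
    have hint : ∀ (v : S → ℝ → ℝ), (∀ t, Measurable (v t)) → ∀ (Mv : ℝ),
        (∀ t, ∀ α' ∈ Set.Icc (0:ℝ) 1, |v t α'| ≤ Mv) →
        Integrable (fun p : (ℝ × S) × ℝ =>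
          softPinballDeriv β κ (p.1.1 + γ * v p.1.2 p.2 - v s α)) μ := by
      intro v hv Mv hMv
      refine Integrable.mono' (integrable_const ((M + Mv + Mv)/κ))
        ((hvm v hv).aestronglyMeasurable) ?_
      filter_upwards [hae1, hae2] with p hp1 hp2
      have h1 := mul_abs_softPinballDeriv_le hε0 hε2 hκ0 hκ1 hβ1 hβ2
        (p.1.1 + γ * v p.1.2 p.2 - v s α)
      have hMv0 : 0 ≤ Mv := (abs_nonneg _).trans (hMv s α hα)
      have h3 : |γ * v p.1.2 p.2| ≤ Mv := by
        rw [abs_mul, abs_of_pos hγ0]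
        nlinarith [hMv p.1.2 p.2 hp2, abs_nonneg (v p.1.2 p.2)]
      have h2 : |p.1.1 + γ * v p.1.2 p.2 - v s α| ≤ M + Mv + Mv := by
        have e1 := abs_add_le (p.1.1 + γ * v p.1.2 p.2) (-(v s α))
        rw [abs_neg] at e1
        have e2 := abs_add_le p.1.1 (γ * v p.1.2 p.2)
        have e3 := hMv s α hα
        rw [sub_eq_add_neg]
        linarith
      rw [Real.norm_eq_abs, le_div_iff₀ hκ0]
      nlinarith [h1, h2]
    have hi₁ := hint v₁ hm₁ M₁ hM₁
    have hi₂ := hint v₂ hm₂ M₂ hM₂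
    set g₁ : (ℝ × S) × ℝ → ℝ := fun p =>
      softPinballDeriv β κ (p.1.1 + γ * v₁ p.1.2 p.2 - v₁ s α) with hg₁
    set g₂ : (ℝ × S) × ℝ → ℝ := fun p =>
      softPinballDeriv β κ (p.1.1 + γ * v₂ p.1.2 p.2 - v₂ s α) with hg₂
    have haeptw : ∀ᵐ p ∂μ, |(v₁ s α - v₂ s α) + η * (g₁ p - g₂ p)| ≤ B := by
      filter_upwards [hae2] with p hp2
      exact key_pointwise hγ0 hγ1 hε0 hε2 hκ0 hκ1 hη0 hηκ hβ1 hβ2 hdC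
        (hdiff p.1.2 p.2 hp2) (by ring)
    have hup : ∀ᵐ p ∂μ, g₁ p - g₂ p ≤ (B - (v₁ s α - v₂ s α))/η := by
      filter_upwards [haeptw] with p hp
      rw [le_div_iff₀ hη0]
      have := (abs_le.1 hp).2
      linarith
    have hlo : ∀ᵐ p ∂μ, (-(B + (v₁ s α - v₂ s α)))/η ≤ g₁ p - g₂ p := by
      filter_upwards [haeptw] with p hp
      rw [div_le_iff₀ hη0]
      have := (abs_le.1 hp).1
      linarith
    have hintsub := hi₁.sub hi₂
    have hIub : (∫ p, (g₁ p - g₂ p) ∂μ) ≤ (B - (v₁ s α - v₂ s α))/η := by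
      calc (∫ p, (g₁ p - g₂ p) ∂μ)
          ≤ ∫ _, (B - (v₁ s α - v₂ s α))/η ∂μ :=
            integral_mono_ae hintsub (integrable_const _) hup
        _ = (B - (v₁ s α - v₂ s α))/η := by simp
    have hIlb : (-(B + (v₁ s α - v₂ s α)))/η ≤ ∫ p, (g₁ p - g₂ p) ∂μ := by
      calc (-(B + (v₁ s α - v₂ s α)))/η
          = ∫ _, (-(B + (v₁ s α - v₂ s α)))/η ∂μ := by simp
        _ ≤ ∫ p, (g₁ p - g₂ p) ∂μ :=
            integral_mono_ae (integrable_const _) hintsub hlo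
    have hsub : (∫ p, g₁ p ∂μ) - (∫ p, g₂ p ∂μ) = ∫ p, (g₁ p - g₂ p) ∂μ :=
      (integral_sub hi₁ hi₂).symm
    rw [abs_le]
    have hm1 := mul_le_mul_of_nonneg_left hIub hη0.le
    have hm2 := mul_le_mul_of_nonneg_left hIlb hη0.le
    have hcan1 : η * ((B - (v₁ s α - v₂ s α))/η) = B - (v₁ s α - v₂ s α) := by
      field_simp
    have hcan2 : η * ((-(B + (v₁ s α - v₂ s α)))/η) = -(B + (v₁ s α - v₂ s α)) := by
      field_simp
    constructor <;> rw [hsub] <;> linarith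
  -- now the suprema
  have hT : ∀ (v : S → ℝ → ℝ), softVaRBellman P γ ε κ η v s α =
      v s α + η * ⨆ a : A,
        ∫ p : (ℝ × S) × ℝ,
          softPinballDeriv β κ (p.1.1 + γ * v p.1.2 p.2 - v s α)
          ∂((P s a).prod (volume.restrict (Set.Icc (0:ℝ) 1))) := by
    intro v
    rw [softVaRBellman, hβdef]
  rw [hT v₁, hT v₂]
  set F₁ : A → ℝ := fun a =>
    ∫ p : (ℝ × S) × ℝ,
      softPinballDeriv β κ (p.1.1 + γ * v₁ p.1.2 p.2 - v₁ s α)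
      ∂((P s a).prod (volume.restrict (Set.Icc (0:ℝ) 1))) with hF₁
  set F₂ : A → ℝ := fun a =>
    ∫ p : (ℝ × S) × ℝ,
      softPinballDeriv β κ (p.1.1 + γ * v₂ p.1.2 p.2 - v₂ s α)
      ∂((P s a).prod (volume.restrict (Set.Icc (0:ℝ) 1))) with hF₂
  have hbdd₁ : BddAbove (Set.range F₁) := (Set.finite_range F₁).bddAbove
  have hbdd₂ : BddAbove (Set.range F₂) := (Set.finite_range F₂).bddAbove
  have hupF : ∀ a : A, F₁ a - F₂ a ≤ (B - (v₁ s α - v₂ s α))/η := by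
    intro a
    have h := (abs_le.1 (key a)).2
    rw [le_div_iff₀ hη0]
    linarith
  have hloF : ∀ a : A, F₂ a - F₁ a ≤ (B + (v₁ s α - v₂ s α))/η := by
    intro a
    have h := (abs_le.1 (key a)).1
    rw [le_div_iff₀ hη0]
    linarith
  have h1 : (⨆ a, F₁ a) ≤ (⨆ a, F₂ a) + (B - (v₁ s α - v₂ s α))/η := by
    refine ciSup_le fun a => ?_
    have h := le_ciSup hbdd₂ a
    linarith [hupF a]
  have h2 : (⨆ a, F₂ a) ≤ (⨆ a, F₁ a) + (B + (v₁ s α - v₂ s α))/η := by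
    refine ciSup_le fun a => ?_
    have h := le_ciSup hbdd₁ a
    linarith [hloF a]
  have hcan1 : η * ((B - (v₁ s α - v₂ s α))/η) = B - (v₁ s α - v₂ s α) := by field_simp
  have hcan2 : η * ((B + (v₁ s α - v₂ s α))/η) = B + (v₁ s α - v₂ s α) := by field_simp
  have hm1 := mul_le_mul_of_nonneg_left h1 hη0.le
  have hm2 := mul_le_mul_of_nonneg_left h2 hη0.le
  rw [abs_le]
  constructor <;> nlinarith [hm1, hm2]
end

section
/- Key inequality for contraction: for any β ∈ [ε, 1−ε], ε ∈ (0,1/2), κ ∈ (0,1], η ∈ (0,κ], γ ∈ (0,1), and reals A₁, A₂, B₁, B₂ with |A₁−A₂| ≤ D and |B₁−B₂| ≤ D, it holds that (A₁ − A₂) + η·[∂l^κ_β(γB₁ − A₁ + c) − ∂l^κ_β(γB₂ − A₂ + c)] ≤ (1 − ηεκ(1−γ))·D for any constant c ∈ ℝ. -/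
open Set

section aux
variable {β κ δ : ℝ}

lemma spd_e1 (hκ0 : 0 < κ) (h : δ ≤ -κ) :
    softPinballDeriv β κ δ = (1 - β) * (κ * δ + κ ^ 2 - 1) := by
  unfold softPinballDeriv
  rcases lt_or_eq_of_le h with h' | h'
  · rw [if_pos h']
  · subst h'
    rw [if_neg (lt_irrefl _), if_pos (by linarith)]
    field_simp; ring

lemma spd_e2 (hκ0 : 0 < κ) (h1 : -κ ≤ δ) (h2 : δ ≤ 0) :
    softPinballDeriv β κ δ = (1 - β) / κ * δ := by
  unfold softPinballDeriv
  rw [if_neg (by linarith)]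
  rcases lt_or_eq_of_le h2 with h' | h'
  · rw [if_pos h']
  · subst h'
    rw [if_neg (lt_irrefl _), if_pos hκ0]
    ring

lemma spd_e3 (hκ0 : 0 < κ) (h1 : 0 ≤ δ) (h2 : δ ≤ κ) :
    softPinballDeriv β κ δ = β / κ * δ := by
  unfold softPinballDeriv
  rw [if_neg (by linarith), if_neg (by linarith)]
  rcases lt_or_eq_of_le h2 with h' | h'
  · rw [if_pos h']
  · subst h'
    rw [if_neg (lt_irrefl _)]
    field_simp; ring

lemma spd_e4 (hκ0 : 0 < κ) (h : κ ≤ δ) :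
    softPinballDeriv β κ δ = β * (κ * δ - κ ^ 2 + 1) := by
  unfold softPinballDeriv
  rw [if_neg (by linarith), if_neg (by linarith), if_neg (by linarith)]

end aux

section bounds
variable (β ε κ : ℝ) (hβ1 : ε ≤ β) (hβ2 : β ≤ 1 - ε)
  (hε0 : 0 < ε) (hκ0 : 0 < κ) (hκ1 : κ ≤ 1)

-- single-segment bounds
include hβ1 hβ2 hε0 hκ0 hκ1

lemma spd_seg1 (x y : ℝ) (hxy : y ≤ x) (hx : x ≤ -κ) :
    ε * κ * (x - y) ≤ softPinballDeriv β κ x - softPinballDeriv β κ y ∧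
    softPinballDeriv β κ x - softPinballDeriv β κ y ≤ (1 - ε) / κ * (x - y) := by
  rw [spd_e1 hκ0 hx, spd_e1 hκ0 (hxy.trans hx)]
  constructor
  · nlinarith [mul_nonneg (sub_nonneg.2 hxy) (mul_nonneg (by linarith : (0:ℝ) ≤ 1 - β - ε) hκ0.le)]
  · rw [div_mul_eq_mul_div, le_div_iff₀ hκ0]
    nlinarith [mul_nonneg (sub_nonneg.2 hxy) (by nlinarith [mul_nonneg (by linarith : (0:ℝ) ≤ 1 - β) (by nlinarith : (0:ℝ) ≤ 1 - κ^2)] : (0:ℝ) ≤ (1 - ε) - (1-β)*κ^2)]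

lemma spd_seg2 (x y : ℝ) (hxy : y ≤ x) (hx : x ≤ 0) (hy : -κ ≤ y) :
    ε * κ * (x - y) ≤ softPinballDeriv β κ x - softPinballDeriv β κ y ∧
    softPinballDeriv β κ x - softPinballDeriv β κ y ≤ (1 - ε) / κ * (x - y) := by
  rw [spd_e2 hκ0 (hy.trans hxy) hx, spd_e2 hκ0 hy (hxy.trans hx)]
  rw [div_mul_eq_mul_div, div_mul_eq_mul_div, div_mul_eq_mul_div, ← sub_div,
    le_div_iff₀ hκ0, div_le_div_iff₀ hκ0 hκ0]
  constructor
  · nlinarith [mul_nonneg (sub_nonneg.2 hxy) (by nlinarith [mul_nonneg hε0.le (by nlinarith : (0:ℝ) ≤ 1 - κ^2)] : (0:ℝ) ≤ (1-β) - ε*κ^2)]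
  · nlinarith [mul_nonneg (sub_nonneg.2 hxy) (by linarith : (0:ℝ) ≤ (1-ε) - (1-β)), mul_pos hκ0 hκ0]

lemma spd_seg3 (x y : ℝ) (hxy : y ≤ x) (hx : x ≤ κ) (hy : 0 ≤ y) :
    ε * κ * (x - y) ≤ softPinballDeriv β κ x - softPinballDeriv β κ y ∧
    softPinballDeriv β κ x - softPinballDeriv β κ y ≤ (1 - ε) / κ * (x - y) := by
  rw [spd_e3 hκ0 (hy.trans hxy) hx, spd_e3 hκ0 hy (hxy.trans hx)]
  rw [div_mul_eq_mul_div, div_mul_eq_mul_div, div_mul_eq_mul_div, ← sub_div,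
    le_div_iff₀ hκ0, div_le_div_iff₀ hκ0 hκ0]
  constructor
  · nlinarith [mul_nonneg (sub_nonneg.2 hxy) (by nlinarith [mul_nonneg hε0.le (by nlinarith : (0:ℝ) ≤ 1 - κ^2)] : (0:ℝ) ≤ β - ε*κ^2)]
  · nlinarith [mul_nonneg (sub_nonneg.2 hxy) (by linarith : (0:ℝ) ≤ (1-ε) - β), mul_pos hκ0 hκ0]

lemma spd_seg4 (x y : ℝ) (hxy : y ≤ x) (hy : κ ≤ y) :
    ε * κ * (x - y) ≤ softPinballDeriv β κ x - softPinballDeriv β κ y ∧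
    softPinballDeriv β κ x - softPinballDeriv β κ y ≤ (1 - ε) / κ * (x - y) := by
  rw [spd_e4 hκ0 (hy.trans hxy), spd_e4 hκ0 hy]
  constructor
  · nlinarith [mul_nonneg (sub_nonneg.2 hxy) (mul_nonneg (by linarith : (0:ℝ) ≤ β - ε) hκ0.le)]
  · rw [div_mul_eq_mul_div, le_div_iff₀ hκ0]
    nlinarith [mul_nonneg (sub_nonneg.2 hxy) (by nlinarith [mul_nonneg (by linarith : (0:ℝ) ≤ β) (by nlinarith : (0:ℝ) ≤ 1 - κ^2)] : (0:ℝ) ≤ (1 - ε) - β*κ^2)]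

lemma spd_from3 (x y : ℝ) (hxy : y ≤ x) (hy : 0 ≤ y) :
    ε * κ * (x - y) ≤ softPinballDeriv β κ x - softPinballDeriv β κ y ∧
    softPinballDeriv β κ x - softPinballDeriv β κ y ≤ (1 - ε) / κ * (x - y) := by
  rcases le_total y κ with hyκ | hyκ
  · rcases le_total x κ with hx | hx
    · exact spd_seg3 β ε κ hβ1 hβ2 hε0 hκ0 hκ1 x y hxy hx hy
    · obtain ⟨l1, u1⟩ := spd_seg3 β ε κ hβ1 hβ2 hε0 hκ0 hκ1 κ y hyκ (le_refl κ) hy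
      obtain ⟨l2, u2⟩ := spd_seg4 β ε κ hβ1 hβ2 hε0 hκ0 hκ1 x κ hx (le_refl κ)
      constructor <;> nlinarith
  · exact spd_seg4 β ε κ hβ1 hβ2 hε0 hκ0 hκ1 x y hxy hyκ

lemma spd_from2 (x y : ℝ) (hxy : y ≤ x) (hy : -κ ≤ y) :
    ε * κ * (x - y) ≤ softPinballDeriv β κ x - softPinballDeriv β κ y ∧
    softPinballDeriv β κ x - softPinballDeriv β κ y ≤ (1 - ε) / κ * (x - y) := by
  rcases le_total y 0 with hy0 | hy0
  · rcases le_total x 0 with hx0 | hx0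
    · exact spd_seg2 β ε κ hβ1 hβ2 hε0 hκ0 hκ1 x y hxy hx0 hy
    · obtain ⟨l1, u1⟩ := spd_seg2 β ε κ hβ1 hβ2 hε0 hκ0 hκ1 0 y hy0 (le_refl 0) hy
      obtain ⟨l2, u2⟩ := spd_from3 β ε κ hβ1 hβ2 hε0 hκ0 hκ1 x 0 hx0 (le_refl 0)
      constructor <;> nlinarith
  · exact spd_from3 β ε κ hβ1 hβ2 hε0 hκ0 hκ1 x y hxy hy0

lemma spd_bounds (x y : ℝ) (hxy : y ≤ x) :
    ε * κ * (x - y) ≤ softPinballDeriv β κ x - softPinballDeriv β κ y ∧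
    softPinballDeriv β κ x - softPinballDeriv β κ y ≤ (1 - ε) / κ * (x - y) := by
  rcases le_total y (-κ) with hy | hy
  · rcases le_total x (-κ) with hx | hx
    · exact spd_seg1 β ε κ hβ1 hβ2 hε0 hκ0 hκ1 x y hxy hx
    · obtain ⟨l1, u1⟩ := spd_seg1 β ε κ hβ1 hβ2 hε0 hκ0 hκ1 (-κ) y hy (le_refl _)
      obtain ⟨l2, u2⟩ := spd_from2 β ε κ hβ1 hβ2 hε0 hκ0 hκ1 x (-κ) hx (le_refl _)
      constructor <;> nlinarith
  · exact spd_from2 β ε κ hβ1 hβ2 hε0 hκ0 hκ1 x y hxy hy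

end bounds


/-- key inequality for the contraction argument. For any
`β ∈ [ε, 1−ε]`, `ε ∈ (0,1/2)`, `κ ∈ (0,1]`, `η ∈ (0,κ]`, `γ ∈ (0,1)` and reals
`A₁, A₂, B₁, B₂` with `|A₁−A₂| ≤ D` and `|B₁−B₂| ≤ D`:
`(A₁ − A₂) + η·[∂l^κ_β(γB₁ − A₁ + c) − ∂l^κ_β(γB₂ − A₂ + c)] ≤ (1 − ηεκ(1−γ))·D`
for any constant `c ∈ ℝ`. -/
theorem softPinballDeriv_contraction_inequality
    (β ε κ η γ : ℝ) (hβ : β ∈ Set.Icc ε (1 - ε)) (hε : ε ∈ Set.Ioo (0:ℝ) (1/2))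
    (hκ : κ ∈ Set.Ioc (0:ℝ) 1) (hη : η ∈ Set.Ioc (0:ℝ) κ) (hγ : γ ∈ Set.Ioo (0:ℝ) 1)
    (A₁ A₂ B₁ B₂ D c : ℝ) (hA : |A₁ - A₂| ≤ D) (hB : |B₁ - B₂| ≤ D) :
    (A₁ - A₂) + η * (softPinballDeriv β κ (γ * B₁ - A₁ + c) -
        softPinballDeriv β κ (γ * B₂ - A₂ + c)) ≤
      (1 - η * ε * κ * (1 - γ)) * D := by
  obtain ⟨hβ1, hβ2⟩ := hβ
  obtain ⟨hε0, hε1⟩ := hε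
  obtain ⟨hκ0, hκ1⟩ := hκ
  obtain ⟨hη0, hη1⟩ := hη
  obtain ⟨hγ0, hγ1⟩ := hγ
  have hD : 0 ≤ D := (abs_nonneg _).trans hA
  have hA1 : A₁ - A₂ ≤ D := (le_abs_self _).trans hA
  have hA2 : -D ≤ A₁ - A₂ := (neg_le_neg hA).trans (neg_abs_le _)
  have hB1 : B₁ - B₂ ≤ D := (le_abs_self _).trans hB
  have hB2 : -D ≤ B₁ - B₂ := (neg_le_neg hB).trans (neg_abs_le _)
  set δ₁ := γ * B₁ - A₁ + c with hδ₁
  set δ₂ := γ * B₂ - A₂ + c with hδ₂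
  rcases le_total δ₂ δ₁ with hd | hd
  · have u := (spd_bounds β ε κ hβ1 hβ2 hε0 hκ0 hκ1 δ₁ δ₂ hd).2
    set s := (1 - ε) / κ with hs
    have hs0 : 0 ≤ s := div_nonneg (by linarith) hκ0.le
    have hηs : η * s ≤ 1 := by
      rw [hs, ← mul_div_assoc]
      rw [div_le_one hκ0]
      nlinarith
    have hsεκ : ε * κ ≤ s := by
      rw [hs, le_div_iff₀ hκ0]
      nlinarith [mul_nonneg hε0.le (by nlinarith : (0:ℝ) ≤ 1 - κ^2)]
    have hdd : δ₁ - δ₂ = γ * (B₁ - B₂) - (A₁ - A₂) := by rw [hδ₁, hδ₂]; ring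
    rw [hdd] at u
    have ht := mul_le_mul_of_nonneg_left u hη0.le
    linarith [ht,
      mul_nonneg (by linarith : (0:ℝ) ≤ D - (A₁ - A₂)) (by linarith : (0:ℝ) ≤ 1 - η * s),
      mul_nonneg (by linarith : (0:ℝ) ≤ D - (B₁ - B₂))
        (mul_nonneg (mul_nonneg hη0.le hs0) hγ0.le),
      mul_nonneg (by linarith : (0:ℝ) ≤ s - ε * κ)
        (mul_nonneg (mul_nonneg hη0.le (by linarith : (0:ℝ) ≤ 1 - γ)) hD)]
  · have l := (spd_bounds β ε κ hβ1 hβ2 hε0 hκ0 hκ1 δ₂ δ₁ hd).1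
    have hdd : δ₂ - δ₁ = (A₁ - A₂) - γ * (B₁ - B₂) := by rw [hδ₁, hδ₂]; ring
    have hηεκ : η * (ε * κ) ≤ 1 := by
      nlinarith [mul_nonneg (sub_nonneg.2 hη1) (mul_nonneg hε0.le hκ0.le),
        mul_nonneg hε0.le (by nlinarith : (0:ℝ) ≤ 1 - κ^2)]
    rw [hdd] at l
    have ht := mul_le_mul_of_nonneg_left l hη0.le
    linarith [ht,
      mul_nonneg (by linarith : (0:ℝ) ≤ D - (A₁ - A₂)) (by linarith : (0:ℝ) ≤ 1 - η * (ε * κ)),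
      mul_nonneg (by linarith : (0:ℝ) ≤ D - (B₁ - B₂))
        (mul_nonneg (mul_nonneg hη0.le (mul_nonneg hε0.le hκ0.le)) hγ0.le)]
end
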